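/- arXiv:2406.06797 — 5 statements merged into one kernel-verified Lean document; each statement's English description precedes it below -/
import Mathlib

section
/- For all integers n ≥ 0 and m ≥ 0: Σ_{k=0}^{n} C(n,k) (−1)^k H_k(m) = (−1)^n (m!/n!) s(n,m). -/
open Finset

/-- Multiple harmonic-like numbers `H_n(m)`: the sum of `1/(k_1 ⋯ k_m)` over all
`m`-tuples of positive integers with `k_1 + ⋯ + k_m ≤ n`. -/
def Hml (n m : ℕ) : ℚ :=
  ∑ k ∈ (Fintype.piFinset fun _ : Fin m => Finset.Icc 1 n).filter
      (fun k => ∑ i, k i ≤ n),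
    ∏ i, (1 : ℚ) / (k i : ℚ)

/-- The `n`-th harmonic number. -/
def harm (n : ℕ) : ℚ := ∑ j ∈ Finset.Icc 1 n, (1 : ℚ) / (j : ℚ)

/-- The `n`-th second-order harmonic number. -/
def harm2 (n : ℕ) : ℚ := ∑ j ∈ Finset.Icc 1 n, (1 : ℚ) / (j : ℚ) ^ 2

/-- The `n`-th odd harmonic number. -/
def oddharm (n : ℕ) : ℚ := ∑ k ∈ Finset.Icc 1 n, (1 : ℚ) / (2 * (k : ℚ) - 1)

/-- Signed Stirling numbers of the first kind. -/
def stirlingFirst : ℕ → ℕ → ℤ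
  | 0, 0 => 1
  | 0, _ + 1 => 0
  | _ + 1, 0 => 0
  | n + 1, k + 1 => stirlingFirst n k - n * stirlingFirst n (k + 1)

/-- Generalized binomial coefficient `C(r, k) = r(r−1)⋯(r−k+1)/k!`. -/
noncomputable def gchoose (r : ℂ) (k : ℕ) : ℂ :=
  (∏ i ∈ Finset.range k, (r - i)) / (k.factorial : ℂ)

/-!
With `L = -log (1 - X) = ∑ Xⁿ / n`, splitting off the first entry of a tuple shows that `H_n(m)`
is the `n`-th coefficient of `Lᵐ / (1 - X)`, i.e. the partial sums of `c_n(m) = [Xⁿ] Lᵐ`.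
Since `L' = 1 / (1 - X)`, differentiating `L^(m+1)` gives `(n + 1) c_{n+1}(m+1) = (m + 1) H_n(m)`,
from which `n! c_n(m) = m! |s(n, m)|` follows by the Stirling recurrence. The same identity
drives an induction on `m` showing that the alternating binomial transform of `H(m)` is
`(-1)ᵐ c(m)`: the transform of partial sums is minus the transform of the shifted terms, and
dividing the `k`-th term by `k + 1` turns the transform into averaged partial sums of it.
-/

open PowerSeries

section BinomialTransform

variable {R : Type*} [CommRing R]

def binomialTransform (a : ℕ → R) (n : ℕ) : R :=
  ∑ k ∈ range (n + 1), (n.choose k : R) * (-1) ^ k * a k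

theorem binomialTransform_zero (a : ℕ → R) : binomialTransform a 0 = a 0 := by
  simp [binomialTransform]

theorem binomialTransform_const_mul (r : R) (a : ℕ → R) (n : ℕ) :
    binomialTransform (fun k => r * a k) n = r * binomialTransform a n := by
  simp only [binomialTransform, mul_sum]
  exact sum_congr rfl fun k _ => by ring

theorem binomialTransform_succ (a : ℕ → R) (n : ℕ) :
    binomialTransform a (n + 1) =
      binomialTransform a n - binomialTransform (fun k => a (k + 1)) n := by
  have hn : binomialTransform a n = ∑ k ∈ range (n + 2), (n.choose k : R) * (-1) ^ k * a k := by
    simp [binomialTransform, sum_range_succ _ (n + 1)]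
  rw [hn, binomialTransform, binomialTransform, sum_range_succ' _ (n + 1),
    sum_range_succ' _ (n + 1), sub_eq_add_neg, ← sum_neg_distrib, add_right_comm,
    ← sum_add_distrib]
  simp only [Nat.choose_succ_succ, Nat.choose_zero_right]
  congr 1
  exact sum_congr rfl fun k _ => by push_cast; ring

theorem binomialTransform_succ_of_sub_eq (a c : ℕ → R) (h : ∀ k, a (k + 1) - a k = c (k + 1))
    (n : ℕ) : binomialTransform a (n + 1) = -binomialTransform (fun k => c (k + 1)) n := by
  have hshift : binomialTransform (fun k => a (k + 1)) n =
      binomialTransform a n + binomialTransform (fun k => c (k + 1)) n := by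
    simp only [binomialTransform, ← sum_add_distrib]
    exact sum_congr rfl fun k _ => by rw [← h k]; ring
  rw [binomialTransform_succ, hshift]
  ring

theorem sum_range_binomialTransform (a : ℕ → R) (n : ℕ) :
    ∑ j ∈ range (n + 1), binomialTransform a j =
      ∑ k ∈ range (n + 1), ((n + 1).choose (k + 1) : R) * (-1) ^ k * a k := by
  induction n with
  | zero => simp [binomialTransform]
  | succ n ih =>
    have hlast : ∑ k ∈ range (n + 2), ((n + 1).choose (k + 1) : R) * (-1) ^ k * a k =
        ∑ k ∈ range (n + 1), ((n + 1).choose (k + 1) : R) * (-1) ^ k * a k := by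
      simp [sum_range_succ _ (n + 1)]
    rw [sum_range_succ, ih, ← hlast, binomialTransform, ← sum_add_distrib]
    exact sum_congr rfl fun k _ => by rw [Nat.choose_succ_succ' (n + 1)]; push_cast; ring

theorem add_one_mul_binomialTransform (a b : ℕ → R) (h : ∀ k : ℕ, ((k : R) + 1) * b k = a k)
    (n : ℕ) :
    ((n : R) + 1) * binomialTransform b n = ∑ j ∈ range (n + 1), binomialTransform a j := by
  rw [sum_range_binomialTransform, binomialTransform, mul_sum]
  refine sum_congr rfl fun k _ => ?_
  have hchoose : ((n : R) + 1) * n.choose k = (n + 1).choose (k + 1) * ((k : R) + 1) := by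
    simpa using congrArg (Nat.cast : ℕ → R) (Nat.add_one_mul_choose_eq n k)
  rw [← h k]
  linear_combination ((-1) ^ k * b k) * hchoose

end BinomialTransform

theorem Hml_zero_right (n : ℕ) : Hml n 0 = 1 := by
  simp [Hml]

theorem mem_Hml_index {m n : ℕ} {k : Fin m → ℕ} :
    k ∈ (Fintype.piFinset fun _ : Fin m => Icc 1 n).filter (fun k => ∑ i, k i ≤ n) ↔
      (∀ i, 0 < k i) ∧ ∑ i, k i ≤ n := by
  simp only [mem_filter, Fintype.mem_piFinset, mem_Icc, Nat.one_le_iff_ne_zero,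
    Nat.pos_iff_ne_zero]
  refine ⟨fun h => ⟨fun i => (h.1 i).1, h.2⟩, fun h => ⟨fun i => ⟨h.1 i, ?_⟩, h.2⟩⟩
  exact (single_le_sum (fun j _ => Nat.zero_le (k j)) (mem_univ i)).trans h.2

theorem Hml_succ_right (n m : ℕ) :
    Hml n (m + 1) = ∑ j ∈ Icc 1 n, 1 / (j : ℚ) * Hml (n - j) m := by
  simp only [Hml, mul_sum]
  rw [sum_sigma']
  refine sum_bij' (fun k _ => ⟨k 0, Fin.tail k⟩) (fun x _ => Fin.cons x.1 x.2) ?_ ?_ ?_ ?_ ?_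
  · intro k hk
    rw [mem_Hml_index, Fin.sum_univ_succ, Fin.forall_fin_succ] at hk
    simp only [mem_sigma, mem_Icc, mem_Hml_index]
    exact ⟨⟨hk.1.1, by omega⟩, hk.1.2, by simp only [Fin.tail]; omega⟩
  · rintro ⟨j, t⟩ h
    simp only [mem_sigma, mem_Icc, mem_Hml_index] at h
    obtain ⟨⟨hj, hjn⟩, ht, hsum⟩ := h
    rw [mem_Hml_index, Fin.sum_cons, Fin.forall_fin_succ]
    exact ⟨⟨hj, by simpa using ht⟩, by dsimp only; omega⟩
  · intro k _; exact Fin.cons_self_tail k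
  · intro x _; simp
  · intro k _
    rw [Fin.prod_univ_succ]
    rfl

/-- `-log (1 - X) = ∑ Xⁿ / n`; its constant coefficient is the junk value `1 / 0 = 0`. -/
def logInvOneSub : ℚ⟦X⟧ :=
  mk fun n => 1 / (n : ℚ)

theorem constantCoeff_logInvOneSub : constantCoeff logInvOneSub = 0 := by
  simp [logInvOneSub, ← coeff_zero_eq_constantCoeff_apply]

theorem derivative_logInvOneSub : d⁄dX ℚ logInvOneSub = PowerSeries.mk 1 := by
  ext n
  simp [logInvOneSub, coeff_derivative]
  field_simp

theorem mk_Hml (m : ℕ) : mk (fun n => Hml n m) = logInvOneSub ^ m * PowerSeries.mk 1 := by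
  induction m with
  | zero => ext n; simp [Hml_zero_right]
  | succ m ih =>
    rw [pow_succ', mul_assoc, ← ih]
    ext n
    rw [coeff_mk, Hml_succ_right, coeff_mul, Nat.sum_antidiagonal_eq_sum_range_succ_mk]
    simp only [logInvOneSub, coeff_mk]
    refine sum_subset (fun j hj => ?_) (fun j hjn hj => ?_)
    · simp only [mem_Icc, mem_range] at hj ⊢; omega
    · have : j = 0 := by simp only [mem_Icc, mem_range, not_and, not_le] at hj hjn; omega
      simp [this]

theorem Hml_eq_sum_coeff (n m : ℕ) :
    Hml n m = ∑ j ∈ range (n + 1), coeff j (logInvOneSub ^ m) := by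
  rw [← coeff_mk n fun n => Hml n m, mk_Hml, coeff_mul, Nat.sum_antidiagonal_eq_sum_range_succ_mk]
  simp

theorem add_one_mul_coeff_succ_logInvOneSub_pow_succ (n m : ℕ) :
    ((n : ℚ) + 1) * coeff (n + 1) (logInvOneSub ^ (m + 1)) = ((m : ℚ) + 1) * Hml n m := by
  have h := congrArg (coeff n) (derivative_pow logInvOneSub (m + 1))
  rw [coeff_derivative, derivative_logInvOneSub, mul_assoc, ← mk_Hml,
    ← map_natCast (C (R := ℚ)), coeff_C_mul, coeff_mk] at h
  push_cast at h
  linear_combination h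

theorem coeff_logInvOneSub_pow_succ_recurrence (n k : ℕ) :
    ((n : ℚ) + 1) * coeff (n + 1) (logInvOneSub ^ (k + 1)) =
      ((k : ℚ) + 1) * coeff n (logInvOneSub ^ k) + n * coeff n (logInvOneSub ^ (k + 1)) := by
  rw [add_one_mul_coeff_succ_logInvOneSub_pow_succ, Hml_eq_sum_coeff, sum_range_succ, mul_add]
  cases n with
  | zero => simp [coeff_zero_eq_constantCoeff_apply, constantCoeff_logInvOneSub]
  | succ n =>
    rw [← Hml_eq_sum_coeff, ← add_one_mul_coeff_succ_logInvOneSub_pow_succ]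
    push_cast
    ring

theorem factorial_mul_coeff_logInvOneSub_pow (n m : ℕ) :
    (n.factorial : ℚ) * coeff n (logInvOneSub ^ m) = m.factorial * Nat.stirlingFirst n m := by
  induction n generalizing m with
  | zero =>
    cases m <;> simp [coeff_zero_eq_constantCoeff_apply, constantCoeff_logInvOneSub]
  | succ n ih =>
    cases m with
    | zero => simp [coeff_one]
    | succ k =>
      have hrec := coeff_logInvOneSub_pow_succ_recurrence n k
      have ihk := ih (k + 1)
      rw [Nat.factorial_succ k] at ihk
      rw [Nat.stirlingFirst_succ_succ, Nat.factorial_succ, Nat.factorial_succ]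
      push_cast at ihk ⊢
      linear_combination (n.factorial : ℚ) * hrec + ((k : ℚ) + 1) * ih k + (n : ℚ) * ihk

theorem stirlingFirst_eq_neg_one_pow_mul (n k : ℕ) :
    stirlingFirst n k = (-1) ^ (n + k) * (Nat.stirlingFirst n k : ℤ) := by
  induction n generalizing k with
  | zero => cases k <;> simp [stirlingFirst]
  | succ n ih =>
    cases k with
    | zero => simp [stirlingFirst]
    | succ k =>
      rw [stirlingFirst, ih, ih, Nat.stirlingFirst_succ_succ]
      push_cast
      ring

theorem binomialTransform_Hml (m n : ℕ) :
    binomialTransform (fun k => Hml k m) n = (-1) ^ m * coeff n (logInvOneSub ^ m) := by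
  have hdiff : ∀ m k, Hml (k + 1) m - Hml k m = coeff (k + 1) (logInvOneSub ^ m) := fun m k => by
    rw [Hml_eq_sum_coeff, Hml_eq_sum_coeff, sum_range_succ _ (k + 1)]
    ring
  induction m generalizing n with
  | zero =>
    cases n with
    | zero => simp [binomialTransform_zero, Hml_zero_right]
    | succ n =>
      rw [binomialTransform_succ_of_sub_eq _ (fun k => coeff k (logInvOneSub ^ 0)) (hdiff 0)]
      simp [coeff_one, binomialTransform]
  | succ m ih =>
    cases n with
    | zero =>
      simp [binomialTransform_zero, Hml_eq_sum_coeff, coeff_zero_eq_constantCoeff_apply,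
        constantCoeff_logInvOneSub]
    | succ n =>
      rw [binomialTransform_succ_of_sub_eq _ (fun k => coeff k (logInvOneSub ^ (m + 1)))
        (hdiff (m + 1))]
      have h := add_one_mul_binomialTransform (fun k => ((m : ℚ) + 1) * Hml k m) _
        (fun k => add_one_mul_coeff_succ_logInvOneSub_pow_succ k m) n
      simp only [binomialTransform_const_mul, ih, ← mul_sum, ← Hml_eq_sum_coeff] at h
      have hn : ((n : ℚ) + 1) ≠ 0 := by positivity
      apply mul_left_cancel₀ hn
      linear_combination -h + (-1) ^ m * add_one_mul_coeff_succ_logInvOneSub_pow_succ n m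

theorem stmt_2 (n m : ℕ) :
    ∑ k ∈ Finset.range (n + 1), (n.choose k : ℚ) * (-1) ^ k * Hml k m =
      (-1) ^ n * ((m.factorial : ℚ) / (n.factorial : ℚ)) * (stirlingFirst n m : ℚ) := by
  have hcoeff := factorial_mul_coeff_logInvOneSub_pow n m
  have hsign : (-1 : ℚ) ^ (n * 2) = 1 := Even.neg_one_pow ⟨n, by ring⟩
  have hn : (n.factorial : ℚ) ≠ 0 := by positivity
  rw [← binomialTransform, binomialTransform_Hml, stirlingFirst_eq_neg_one_pow_mul]
  push_cast
  field_simp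
  linear_combination (-1) ^ m * hcoeff -
    (m.factorial * Nat.stirlingFirst n m * (-1) ^ m : ℚ) * hsign
end

section
/- For all integers n ≥ 1: Σ_{k=0}^{n} C(n,k) (−1)^k H_k(2) = (2/n)·H_{n−1}. -/
/-!
Pairs `(i, j)` with `i + j = n + 1` contribute `∑ 1 / (i (n + 1 - i)) = 2 H_n / (n + 1)` (partial
fractions), so `H_n(2)` is the sequence of partial sums of `2 H_j / (j + 1)`. The alternating
binomial transform of order `n` of a sequence of partial sums is minus the transform of order
`n - 1` of its increments, so the sum equals `-2 ∑_j (-1)^j C(n-1, j) H_j / (j + 1)`. Writing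
`C(n-1, j) / (j + 1) = C(n, j+1) / n` and `H_j = H_{j+1} - 1 / (j + 1)` reduces this to the
classical transforms `∑_k (-1)^k C(n, k) H_k = -1 / n` and
`∑_{k ≥ 1} (-1)^(k-1) C(n, k) / k = H_n`.
-/

open Finset

section AlternatingBinomial

variable {R : Type*} [CommRing R]

lemma alternating_sum_range_choose_eq_choose (n m : ℕ) :
    ∑ k ∈ range (m + 1), (-1 : R) ^ k * ((n + 1).choose k : R) =
      (-1) ^ m * (n.choose m : R) := by
  exact_mod_cast congrArg (Int.cast : ℤ → R) Int.alternating_sum_range_choose_eq_choose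

lemma alternating_sum_range_choose_succ (n : ℕ) :
    ∑ j ∈ range (n + 1), (-1 : R) ^ j * ((n + 1).choose (j + 1) : R) = 1 := by
  have h := alternating_sum_range_choose_eq_choose (R := R) n (n + 1)
  rw [sum_range_succ', Nat.choose_succ_self, Nat.cast_zero, mul_zero] at h
  simp only [pow_succ, mul_neg_one, neg_mul, sum_neg_distrib, Nat.choose_zero_right,
    Nat.cast_one, pow_zero, mul_one] at h
  linear_combination -h

theorem alternating_sum_choose_mul_sum_range (f : ℕ → R) (n : ℕ) :
    ∑ k ∈ range (n + 2), (-1) ^ k * ((n + 1).choose k : R) * ∑ j ∈ range k, f j =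
      -∑ j ∈ range (n + 1), (-1) ^ j * (n.choose j : R) * f j := by
  have tail (j : ℕ) (hj : j < n + 1) :
      ∑ k ∈ Ico (j + 1) (n + 2), (-1 : R) ^ k * ((n + 1).choose k : R) =
        -((-1) ^ j * (n.choose j : R)) := by
    rw [sum_Ico_eq_sub _ (by omega), alternating_sum_range_choose_eq_choose,
      alternating_sum_range_choose_eq_choose, Nat.choose_succ_self]
    ring
  simp_rw [mul_sum]
  rw [sum_comm' (t' := range (n + 1)) (s' := fun j => Ico (j + 1) (n + 2)), ← sum_neg_distrib]
  · refine sum_congr rfl fun j hj => ?_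
    rw [← sum_mul, tail j (mem_range.1 hj)]
    ring
  · intro k j
    simp only [mem_range, mem_Ico]
    omega

end AlternatingBinomial

lemma harm_eq_harmonic (n : ℕ) : harm n = harmonic n := by
  simp [harm, harmonic_eq_sum_Icc]

section CharZeroField

variable {K : Type*} [Field K] [CharZero K]

lemma choose_div_add_one (n j : ℕ) :
    (n.choose j : K) / (j + 1) = ((n + 1).choose (j + 1) : K) / (n + 1) := by
  rw [div_eq_div_iff (Nat.cast_add_one_ne_zero j) (Nat.cast_add_one_ne_zero n)]
  exact_mod_cast (mul_comm _ _).trans (Nat.add_one_mul_choose_eq n j)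

lemma alternating_sum_choose_div_add_one (n : ℕ) :
    ∑ j ∈ range (n + 1), (-1) ^ j * (n.choose j : K) / (j + 1) = 1 / (n + 1) := by
  simp_rw [mul_div_assoc, choose_div_add_one, ← mul_div_assoc, ← sum_div,
    alternating_sum_range_choose_succ]

end CharZeroField

lemma harmonic_eq_alternating_sum_choose (n : ℕ) :
    harmonic n = ∑ j ∈ range n, (-1) ^ j * (n.choose (j + 1) : ℚ) / (j + 1) := by
  induction n with
  | zero => simp
  | succ n ih =>
    simp_rw [Nat.choose_succ_succ', Nat.cast_add, mul_add, add_div, sum_add_distrib,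
      alternating_sum_choose_div_add_one, sum_range_succ _ n, Nat.choose_succ_self, ← ih]
    rw [harmonic_succ]
    push_cast
    ring

lemma alternating_sum_choose_mul_harmonic (n : ℕ) :
    ∑ k ∈ range (n + 2), (-1) ^ k * ((n + 1).choose k : ℚ) * harmonic k = -1 / (n + 1) := by
  simp only [harmonic]
  rw [alternating_sum_choose_mul_sum_range, neg_div, ← alternating_sum_choose_div_add_one]
  push_cast
  simp_rw [div_eq_mul_inv]

lemma alternating_sum_choose_mul_harmonic_div_add_one (n : ℕ) :
    ∑ j ∈ range (n + 1), (-1) ^ j * (n.choose j : ℚ) * harmonic j / (j + 1) =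
      -harmonic n / (n + 1) := by
  have hA := alternating_sum_choose_mul_harmonic n
  rw [sum_range_succ'] at hA
  simp only [harmonic_zero, mul_zero, add_zero] at hA
  have hB := harmonic_eq_alternating_sum_choose (n + 1)
  calc _ = (-∑ j ∈ range (n + 1),
              (-1) ^ (j + 1) * ((n + 1).choose (j + 1) : ℚ) * harmonic (j + 1)
            - ∑ j ∈ range (n + 1), (-1) ^ j * ((n + 1).choose (j + 1) : ℚ) / (j + 1)) /
            (n + 1) := by
        rw [← sum_neg_distrib, ← sum_sub_distrib, sum_div]
        refine sum_congr rfl fun j _ => ?_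
        have h := choose_div_add_one (K := ℚ) n j
        rw [harmonic_succ]
        field_simp at h ⊢
        push_cast
        linear_combination ((-1) ^ j * harmonic j * (j + 1)) * h
    _ = -harmonic n / (n + 1) := by
        rw [hA, ← hB, harmonic_succ]
        field_simp
        push_cast
        ring

lemma Hml_two_eq_sum_harmonic (n : ℕ) :
    Hml n 2 = ∑ i ∈ range n, harmonic (n - (i + 1)) / (i + 1) := by
  have pairs : Hml n 2 = ∑ x ∈ (range n).sigma (fun i => range (n - (i + 1))),
      ((x.1 + 1 : ℚ) * (x.2 + 1))⁻¹ := by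
    refine sum_nbij' (fun k => ⟨k 0 - 1, k 1 - 1⟩) (fun x => ![x.1 + 1, x.2 + 1])
      ?_ ?_ ?_ ?_ ?_
    · intro k hk
      simp only [mem_filter, Fintype.mem_piFinset, mem_Icc, Fin.sum_univ_two] at hk
      have := hk.1 0
      have := hk.1 1
      simp only [mem_sigma, mem_range]
      omega
    · rintro ⟨i, j⟩ hx
      simp only [mem_sigma, mem_range] at hx
      simp only [mem_filter, Fintype.mem_piFinset, mem_Icc, Fin.sum_univ_two,
        Fin.forall_fin_two, Matrix.cons_val_zero, Matrix.cons_val_one]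
      omega
    · intro k hk
      simp only [mem_filter, Fintype.mem_piFinset, mem_Icc] at hk
      have := hk.1 0
      have := hk.1 1
      ext i
      fin_cases i <;> simp <;> omega
    · rintro ⟨i, j⟩ _
      simp
    · intro k hk
      simp only [mem_filter, Fintype.mem_piFinset, mem_Icc] at hk
      have := hk.1 0
      have := hk.1 1
      simp only [Fin.prod_univ_two, one_div, mul_inv]
      push_cast [Nat.cast_sub (by omega : 1 ≤ k 0), Nat.cast_sub (by omega : 1 ≤ k 1)]
      ring
  rw [pairs, sum_sigma]
  refine sum_congr rfl fun i _ => ?_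
  rw [harmonic, sum_div]
  refine sum_congr rfl fun j _ => ?_
  push_cast
  field_simp

lemma sum_range_inv_mul_inv_sub (n : ℕ) :
    ∑ i ∈ range n, ((i + 1 : ℚ) * (n - i))⁻¹ = 2 * harmonic n / (n + 1) := by
  have reflect : ∑ i ∈ range n, ((n : ℚ) - i)⁻¹ = harmonic n := by
    rw [harmonic, ← sum_range_reflect]
    refine sum_congr rfl fun i hi => ?_
    rw [Nat.sub_sub, Nat.cast_sub (by simp at hi; omega)]
    push_cast
    ring
  have split (i : ℕ) (hi : i ∈ range n) :
      ((i + 1 : ℚ) * (n - i))⁻¹ = ((i + 1 : ℚ)⁻¹ + ((n : ℚ) - i)⁻¹) / (n + 1) := by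
    have : (n : ℚ) - i ≠ 0 := sub_ne_zero.2 (by exact_mod_cast (mem_range.1 hi).ne')
    field_simp
    ring
  rw [sum_congr rfl split, ← sum_div, sum_add_distrib, reflect, harmonic]
  push_cast
  ring

lemma Hml_two_succ (n : ℕ) : Hml (n + 1) 2 = Hml n 2 + 2 * harmonic n / (n + 1) := by
  rw [Hml_two_eq_sum_harmonic, Hml_two_eq_sum_harmonic, sum_range_succ, Nat.sub_self,
    harmonic_zero, zero_div, add_zero, ← sum_range_inv_mul_inv_sub, ← sum_add_distrib]
  refine sum_congr rfl fun i hi => ?_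
  have hi : i < n := mem_range.1 hi
  rw [show n + 1 - (i + 1) = n - (i + 1) + 1 by omega, harmonic_succ,
    show n - (i + 1) + 1 = n - i by omega, Nat.cast_sub hi.le]
  have : (i : ℚ) < n := by exact_mod_cast hi
  field_simp

lemma Hml_two_eq_sum (n : ℕ) : Hml n 2 = ∑ j ∈ range n, 2 * harmonic j / (j + 1) := by
  induction n with
  | zero => simp [Hml_two_eq_sum_harmonic]
  | succ n ih => rw [Hml_two_succ, ih, sum_range_succ]

theorem stmt_7 (n : ℕ) (hn : 1 ≤ n) :
    ∑ k ∈ Finset.range (n + 1), (n.choose k : ℚ) * (-1) ^ k * Hml k 2 =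
      2 / (n : ℚ) * harm (n - 1) := by
  obtain ⟨n, rfl⟩ := Nat.exists_eq_add_of_le' hn
  simp_rw [Hml_two_eq_sum, mul_comm (((n + 1).choose _ : ℕ) : ℚ)]
  rw [alternating_sum_choose_mul_sum_range, Nat.add_sub_cancel, harm_eq_harmonic]
  have double (j : ℕ) : (-1) ^ j * (n.choose j : ℚ) * (2 * harmonic j / (j + 1)) =
      2 * ((-1) ^ j * n.choose j * harmonic j / (j + 1)) := by ring
  simp_rw [double, ← mul_sum, alternating_sum_choose_mul_harmonic_div_add_one]
  push_cast
  ring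
end

section
/- For all integers n ≥ 1: Σ_{k=1}^{n} C(n,k) (−1)^{k+1} H_k/k = H_n^{(2)}. -/
open Finset

lemma harm_succ (n : ℕ) : harm (n+1) = harm n + 1/((n:ℚ)+1) := by
  unfold harm
  rw [Finset.sum_Icc_succ_top (by omega)]
  push_cast
  ring

lemma harm_zero : harm 0 = 0 := by simp [harm]

lemma lemC (m : ℕ) :
    ∑ j ∈ range (m+1), (m.choose j : ℚ) * (-1)^j / ((j:ℚ)+1) = 1/((m:ℚ)+1) := by
  have key : ∀ j ∈ range (m+1), (m.choose j : ℚ) * (-1)^j / ((j:ℚ)+1)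
      = (((m+1).choose (j+1) : ℚ) * (-1)^j) / ((m:ℚ)+1) := by
    intro j _
    have h := Nat.add_one_mul_choose_eq m j
    have h' : ((m:ℚ)+1) * (m.choose j : ℚ) = ((m+1).choose (j+1) : ℚ) * ((j:ℚ)+1) := by
      exact_mod_cast congrArg (Nat.cast : ℕ → ℚ) h
    have hj : ((j:ℚ)+1) ≠ 0 := by positivity
    have hm : ((m:ℚ)+1) ≠ 0 := by positivity
    field_simp
    linear_combination h'
  rw [Finset.sum_congr rfl key]
  rw [← Finset.sum_div]
  have : ∑ j ∈ range (m+1), (((m+1).choose (j+1) : ℚ) * (-1)^j) = 1 := by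
    have h0 : ∑ i ∈ range (m+2), (-1:ℚ)^i * ((m+1).choose i : ℚ) = 0 := by
      have := Int.alternating_sum_range_choose (n := m+1)
      have h2 := congrArg (Int.cast : ℤ → ℚ) this
      push_cast at h2
      simpa using h2
    rw [Finset.sum_range_succ' (fun i => (-1:ℚ)^i * ((m+1).choose i : ℚ)) (m+1)] at h0
    simp at h0
    calc ∑ j ∈ range (m+1), (((m+1).choose (j+1) : ℚ) * (-1)^j)
        = ∑ j ∈ range (m+1), (-1:ℚ)^(j+1) * ((m+1).choose (j+1) : ℚ) * (-1) := by
          apply Finset.sum_congr rfl; intro j _; ring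
      _ = 1 := by rw [← Finset.sum_mul]; linarith [h0]
  rw [this]

lemma lemB' (m : ℕ) :
    ∑ i ∈ range (m+1), ((m+1).choose (i+1) : ℚ) * (-1)^i * harm (i+1) = 1/((m:ℚ)+1) := by
  have step : ∀ i ∈ range (m+1), ((m+1).choose (i+1) : ℚ) * (-1)^i * harm (i+1)
      = (m.choose (i+1) : ℚ) * (-1)^i * harm (i+1)
        + ((m.choose i : ℚ) * (-1)^i * harm i + (m.choose i : ℚ) * (-1)^i / ((i:ℚ)+1)) := by
    intro i _
    have hp : (m+1).choose (i+1) = m.choose i + m.choose (i+1) := Nat.choose_succ_succ m i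
    rw [hp, harm_succ]
    push_cast
    ring
  rw [Finset.sum_congr rfl step, Finset.sum_add_distrib, Finset.sum_add_distrib, lemC]
  have hAV : ∑ i ∈ range (m+1), (m.choose (i+1) : ℚ) * (-1)^i * harm (i+1)
      = - ∑ i ∈ range (m+1), (m.choose i : ℚ) * (-1)^i * harm i := by
    have h1 : ∑ j ∈ range (m+2), (m.choose j : ℚ) * (-1)^j * harm j
        = ∑ i ∈ range (m+1), (m.choose i : ℚ) * (-1)^i * harm i := by
      rw [Finset.sum_range_succ]
      simp [Nat.choose_succ_self]
    have h2 : ∑ j ∈ range (m+2), (m.choose j : ℚ) * (-1)^j * harm j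
        = ∑ i ∈ range (m+1), (m.choose (i+1) : ℚ) * (-1)^(i+1) * harm (i+1) := by
      rw [Finset.sum_range_succ' (fun j => (m.choose j : ℚ) * (-1)^j * harm j) (m+1)]
      simp [harm_zero]
    have h3 : ∑ i ∈ range (m+1), (m.choose (i+1) : ℚ) * (-1)^(i+1) * harm (i+1)
        = - ∑ i ∈ range (m+1), (m.choose (i+1) : ℚ) * (-1)^i * harm (i+1) := by
      rw [← Finset.sum_neg_distrib]
      apply Finset.sum_congr rfl
      intro i _; ring
    rw [h2, h3] at h1
    linarith
  rw [hAV]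
  ring


lemma harm2_succ (n : ℕ) : harm2 (n+1) = harm2 n + 1/((n:ℚ)+1)^2 := by
  unfold harm2
  rw [Finset.sum_Icc_succ_top (by omega)]
  push_cast
  ring

lemma main_range (n : ℕ) (hn : 1 ≤ n) :
    ∑ i ∈ range n, (n.choose (i+1) : ℚ) * (-1)^i * harm (i+1) / ((i:ℚ)+1) = harm2 n := by
  induction n, hn using Nat.le_induction with
  | base =>
    simp [harm, harm2]
  | succ n hn ih =>
    have step : ∀ i ∈ range (n+1), ((n+1).choose (i+1) : ℚ) * (-1)^i * harm (i+1) / ((i:ℚ)+1)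
        = (n.choose (i+1) : ℚ) * (-1)^i * harm (i+1) / ((i:ℚ)+1)
          + ((n+1).choose (i+1) : ℚ) * (-1)^i * harm (i+1) / ((n:ℚ)+1) := by
      intro i _
      have hp : ((n+1).choose (i+1) : ℚ) = (n.choose i : ℚ) + (n.choose (i+1) : ℚ) := by
        exact_mod_cast congrArg (Nat.cast : ℕ → ℚ) (Nat.choose_succ_succ n i)
      have hs : ((n:ℚ)+1) * (n.choose i : ℚ) = ((n+1).choose (i+1) : ℚ) * ((i:ℚ)+1) := by
        exact_mod_cast congrArg (Nat.cast : ℕ → ℚ) (Nat.add_one_mul_choose_eq n i)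
      have hi : ((i:ℚ)+1) ≠ 0 := by positivity
      have hn1 : ((n:ℚ)+1) ≠ 0 := by positivity
      have key : ((n+1).choose (i+1) : ℚ)/((i:ℚ)+1)
          = (n.choose (i+1):ℚ)/((i:ℚ)+1) + ((n+1).choose (i+1):ℚ)/((n:ℚ)+1) := by
        field_simp
        linear_combination ((n:ℚ)+1)*hp + hs
      linear_combination ((-1:ℚ)^i * harm (i+1)) * key
    rw [Finset.sum_congr rfl step, Finset.sum_add_distrib]
    have h1 : ∑ i ∈ range (n+1), (n.choose (i+1) : ℚ) * (-1)^i * harm (i+1) / ((i:ℚ)+1)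
        = harm2 n := by
      rw [Finset.sum_range_succ, ih]
      simp [Nat.choose_succ_self]
    have h2 : ∑ i ∈ range (n+1), ((n+1).choose (i+1) : ℚ) * (-1)^i * harm (i+1) / ((n:ℚ)+1)
        = 1/((n:ℚ)+1)^2 := by
      rw [← Finset.sum_div, lemB']
      field_simp
    rw [h1, h2, harm2_succ]

theorem stmt_9 (n : ℕ) (hn : 1 ≤ n) :
    ∑ k ∈ Finset.Icc 1 n, (n.choose k : ℚ) * (-1) ^ (k + 1) * harm k / (k : ℚ) =
      harm2 n := by
  rw [← main_range n hn, ← Finset.Ico_add_one_right_eq_Icc, Finset.sum_Ico_eq_sum_range]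
  apply Finset.sum_congr
  · congr 1
  · intro i _
    rw [show 1+i = i+1 from Nat.add_comm 1 i]
    push_cast
    ring
end

section
/- For all integers m ≥ 0 and n ≥ 1: Σ_{k=1}^{n} H_{n−k}(m)/(k(k+1)) = H_n(m) + H_n(m+1) − H_{n+1}(m+1). -/
open Finset

/-!
Splitting off the first part `k₁ = k` of an `(m+1)`-tuple gives the recursion
`H_n(m+1) = ∑_{k=1}^n H_{n-k}(m) / k`. Writing `1/(k(k+1)) = 1/k - 1/(k+1)`, the left-hand side
becomes `H_n(m+1)` minus `∑_{k=1}^n H_{n-k}(m)/(k+1)`, and the latter is the recursion for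
`H_{n+1}(m+1)` without its `k = 1` term `H_n(m)`.
-/

lemma mem_Hml_index_iff {n m : ℕ} {k : Fin m → ℕ} :
    k ∈ (Fintype.piFinset fun _ : Fin m => Icc 1 n).filter (fun k => ∑ i, k i ≤ n) ↔
      (∀ i, 1 ≤ k i) ∧ ∑ i, k i ≤ n := by
  simp only [mem_filter, Fintype.mem_piFinset, mem_Icc]
  refine ⟨fun h => ⟨fun i => (h.1 i).1, h.2⟩, fun h => ⟨fun i => ⟨h.1 i, ?_⟩, h.2⟩⟩
  exact (single_le_sum (fun j _ => Nat.zero_le (k j)) (mem_univ i)).trans h.2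

lemma cons_mem_Hml_index_iff {n m a : ℕ} {t : Fin m → ℕ} :
    (Fin.cons a t : Fin (m + 1) → ℕ) ∈
        (Fintype.piFinset fun _ : Fin (m + 1) => Icc 1 n).filter (fun k => ∑ i, k i ≤ n) ↔
      a ∈ Icc 1 n ∧ t ∈ (Fintype.piFinset fun _ : Fin m => Icc 1 (n - a)).filter
        (fun k => ∑ i, k i ≤ n - a) := by
  simp only [mem_Hml_index_iff, Fin.forall_fin_succ, Fin.cons_zero, Fin.cons_succ, Fin.sum_cons,
    mem_Icc]
  have hsum : a + ∑ i, t i ≤ n ↔ a ≤ n ∧ ∑ i, t i ≤ n - a := by omega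
  rw [hsum]
  tauto

lemma sum_Icc_one_add_one {M : Type*} [AddCommMonoid M] (n : ℕ) (f : ℕ → M) :
    ∑ k ∈ Icc 1 (n + 1), f k = f 1 + ∑ k ∈ Icc 1 n, f (k + 1) := by
  rw [← Ico_add_one_right_eq_Icc, sum_eq_sum_Ico_succ_bot (by omega), ← Ico_add_one_right_eq_Icc,
    sum_Ico_add']

theorem Hml_succ (n m : ℕ) :
    Hml n (m + 1) = ∑ k ∈ Icc 1 n, Hml (n - k) m / k := by
  simp only [Hml, sum_div, sum_sigma']
  refine sum_nbij' (fun g => ⟨g 0, Fin.tail g⟩) (fun p => Fin.cons p.1 p.2) ?_ ?_ ?_ ?_ ?_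
  · intro g hg
    rwa [mem_sigma, ← cons_mem_Hml_index_iff, Fin.cons_self_tail]
  · rintro ⟨a, t⟩ hp
    exact cons_mem_Hml_index_iff.mpr (mem_sigma.mp hp)
  · exact fun g _ => Fin.cons_self_tail g
  · rintro ⟨a, t⟩ _
    simp
  · intro g _
    simp only [Fin.prod_univ_succ, Fin.tail]
    ring

theorem Hml_succ_succ (n m : ℕ) :
    Hml (n + 1) (m + 1) = Hml n m + ∑ k ∈ Icc 1 n, Hml (n - k) m / (k + 1) := by
  rw [Hml_succ, sum_Icc_one_add_one]
  simp

theorem stmt_14_general (n m : ℕ) :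
    ∑ k ∈ Finset.Icc 1 n, Hml (n - k) m / ((k : ℚ) * ((k : ℚ) + 1)) =
      Hml n m + Hml n (m + 1) - Hml (n + 1) (m + 1) := by
  have partial_fractions : ∀ k ∈ Icc 1 n, Hml (n - k) m / ((k : ℚ) * ((k : ℚ) + 1)) =
      Hml (n - k) m / k - Hml (n - k) m / (k + 1) := by
    intro k hk
    have hk0 : (k : ℚ) ≠ 0 := Nat.cast_ne_zero.mpr (Nat.one_le_iff_ne_zero.mp (mem_Icc.mp hk).1)
    field_simp
    ring
  rw [sum_congr rfl partial_fractions, sum_sub_distrib, ← Hml_succ, Hml_succ_succ]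
  ring

theorem stmt_14 (n m : ℕ) (hn : 1 ≤ n) :
    ∑ k ∈ Finset.Icc 1 n, Hml (n - k) m / ((k : ℚ) * ((k : ℚ) + 1)) =
      Hml n m + Hml n (m + 1) - Hml (n + 1) (m + 1) :=
  stmt_14_general n m
end

section
/- For every complex number r and all integers m ≥ 1, n ≥ 1: Σ_{k=0}^{n} (−1)^k C(r−1, k) · Σ_{j=m}^{k+1} C(k, j−1) s(j,m)/j! = (−1)^n C(r−1, n)·(1/m!)·H_{n+1}(m) − (1/m!)·Σ_{k=0}^{n} (−1)^k C(r, k)·H_k(m), where C(r,k) denotes the generalized binomial coefficient. -/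
open Finset

/-!
The inner sum over `j` is the coefficient of `x^m` in `∑ⱼ C(k, j-1) (x)ⱼ / j!`, a polynomial
which by Vandermonde's identity is the rising factorial `x^(k+1) / (k+1)!`; so it equals
`c(k+1, m) / (k+1)!`, with `c` the unsigned Stirling numbers of the first kind. On the other
side, `H_{k+1}(m) - H_k(m)` is the sum of `1/(k_1 ⋯ k_m)` over compositions of `k+1` into `m`
parts. Multiplying such a sum by `n = k_1 + ⋯ + k_m` and cancelling each `k_i` against its own
factor turns it into `m` sums over compositions with one part deleted, which is the recursion of
`m! c(n, m) / n!`. The theorem is then summation by parts against the Pascal rule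
`C(r, k+1) = C(r-1, k+1) + C(r-1, k)`.
-/

open Polynomial

theorem stirlingFirst_eq_zero_of_lt {n m : ℕ} (h : n < m) : stirlingFirst n m = 0 := by
  induction n generalizing m with
  | zero => obtain ⟨m, rfl⟩ := Nat.exists_eq_succ_of_ne_zero h.ne'; rfl
  | succ n ih =>
    obtain ⟨m, rfl⟩ := Nat.exists_eq_succ_of_ne_zero (by omega : m ≠ 0)
    rw [stirlingFirst, ih (by omega), ih (by omega)]
    simp

theorem descPochhammer_coeff_eq_stirlingFirst (R : Type*) [CommRing R] (n m : ℕ) :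
    (descPochhammer R n).coeff m = stirlingFirst n m := by
  induction n generalizing m with
  | zero => cases m <;> simp [stirlingFirst, coeff_one]
  | succ n ih =>
    rw [descPochhammer_succ_right, mul_sub, coeff_sub, ← C_eq_natCast, coeff_mul_C, ih]
    cases m with
    | zero => cases n <;> simp [stirlingFirst]
    | succ m => rw [coeff_mul_X, ih, stirlingFirst]; push_cast; ring

theorem ascPochhammer_coeff_eq_stirlingFirst (R : Type*) [CommSemiring R] (n m : ℕ) :
    (ascPochhammer R n).coeff m = Nat.stirlingFirst n m := by
  induction n generalizing m with
  | zero => cases m <;> simp [coeff_one]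
  | succ n ih =>
    rw [ascPochhammer_succ_right, mul_add, coeff_add, ← C_eq_natCast, coeff_mul_C, ih]
    cases m with
    | zero => cases n <;> simp
    | succ m => rw [coeff_mul_X, ih, Nat.stirlingFirst_succ_succ]; push_cast; ring

theorem Nat.sum_Icc_choose_pred_mul_choose (k N : ℕ) :
    ∑ j ∈ Icc 1 (k + 1), k.choose (j - 1) * N.choose j = (N + k).choose (k + 1) := by
  rw [Nat.add_choose_eq, Nat.sum_antidiagonal_eq_sum_range_succ_mk, sum_range_succ',
    Nat.sub_zero, Nat.choose_succ_self, mul_zero, add_zero, ← Ico_add_one_right_eq_Icc,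
    sum_Ico_eq_sum_range, Nat.add_sub_cancel]
  refine sum_congr rfl fun j hj => ?_
  rw [mem_range] at hj
  rw [Nat.add_sub_cancel_left, Nat.add_sub_add_right, Nat.choose_symm (by omega), mul_comm,
    add_comm]

theorem sum_Icc_choose_pred_mul_descPochhammer (K : Type*) [Field K] [CharZero K] (k : ℕ) :
    ∑ j ∈ Icc 1 (k + 1), C ((k.choose (j - 1) : K) / j.factorial) * descPochhammer K j =
      C (((k + 1).factorial : K)⁻¹) * ascPochhammer K (k + 1) := by
  refine eq_of_infinite_eval_eq _ _ (Set.Infinite.mono ?_ (Set.infinite_range_of_injective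
    (Nat.cast_injective (R := K))))
  rintro _ ⟨N, rfl⟩
  have hdesc (j : ℕ) : (descPochhammer K j).eval (N : K) / j.factorial = N.choose j :=
    (Nat.cast_choose_eq_descPochhammer_div K N j).symm
  have hasc :
      (ascPochhammer K (k + 1)).eval (N : K) / (k + 1).factorial = (N + k).choose (k + 1) := by
    rw [Nat.cast_choose_eq_ascPochhammer_div, Nat.add_sub_cancel, Nat.add_sub_cancel]
  simp only [Set.mem_ofPred_eq, eval_finsetSum, eval_mul, eval_C]
  rw [inv_mul_eq_div, hasc, ← Nat.sum_Icc_choose_pred_mul_choose]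
  push_cast
  refine sum_congr rfl fun j _ => ?_
  rw [← hdesc, mul_div_assoc', div_mul_eq_mul_div]

theorem sum_Icc_choose_pred_mul_stirlingFirst_div_factorial (K : Type*) [Field K] [CharZero K]
    (k : ℕ) {m : ℕ} (hm : 1 ≤ m) :
    ∑ j ∈ Icc m (k + 1), (k.choose (j - 1) : K) * stirlingFirst j m / j.factorial =
      Nat.stirlingFirst (k + 1) m / (k + 1).factorial := by
  have h := congrArg (coeff · m) (sum_Icc_choose_pred_mul_descPochhammer K k)
  simp only [finsetSum_coeff, coeff_C_mul, descPochhammer_coeff_eq_stirlingFirst,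
    ascPochhammer_coeff_eq_stirlingFirst] at h
  rw [inv_mul_eq_div] at h
  rw [← h, ← sum_subset (Icc_subset_Icc_left hm)]
  · exact sum_congr rfl fun j _ => by ring
  · intro j hj hjm
    rw [mem_Icc] at hj hjm
    rw [stirlingFirst_eq_zero_of_lt (by omega)]
    simp

def HmlExact (n m : ℕ) : ℚ :=
  ∑ k ∈ (Fintype.piFinset fun _ : Fin m => Icc 1 n).filter (fun k => ∑ i, k i = n),
    ∏ i, (1 : ℚ) / (k i : ℚ)

theorem mem_filter_piFinset_Icc_one {m n : ℕ} {P : (Fin m → ℕ) → Prop} [DecidablePred P]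
    (hP : ∀ x, P x → ∑ i, x i ≤ n) {x : Fin m → ℕ} :
    x ∈ (Fintype.piFinset fun _ : Fin m => Icc 1 n).filter P ↔ (∀ i, 1 ≤ x i) ∧ P x := by
  simp only [mem_filter, Fintype.mem_piFinset, mem_Icc]
  refine ⟨fun h => ⟨fun i => (h.1 i).1, h.2⟩, fun h => ⟨fun i => ⟨h.1 i, ?_⟩, h.2⟩⟩
  exact (single_le_sum (fun j _ => Nat.zero_le (x j)) (mem_univ i)).trans (hP x h.2)

theorem Hml_succ_s16 (n m : ℕ) : Hml (n + 1) m = Hml n m + HmlExact (n + 1) m := by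
  rw [Hml, Hml, HmlExact, ← sum_filter_add_sum_filter_not _ (fun x => ∑ i, x i ≤ n),
    filter_filter, filter_filter]
  congr 1 <;> refine sum_congr (ext fun x => ?_) fun _ _ => rfl
  · rw [mem_filter_piFinset_Icc_one (fun x h => h.1), mem_filter_piFinset_Icc_one (fun x h => h)]
    exact ⟨fun h => ⟨h.1, h.2.2⟩, fun h => ⟨h.1, by omega, h.2⟩⟩
  · rw [mem_filter_piFinset_Icc_one (fun x h => h.1),
      mem_filter_piFinset_Icc_one (fun x h => h.le)]
    exact ⟨fun h => ⟨h.1, by omega⟩, fun h => ⟨h.1, by omega, by omega⟩⟩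

theorem sum_prod_removeNth_eq (n m : ℕ) (i : Fin (m + 1)) :
    ∑ x ∈ (Fintype.piFinset fun _ : Fin (m + 1) => Icc 1 n).filter (fun x => ∑ t, x t = n),
      ∏ j, (1 : ℚ) / (i.removeNth x j) = ∑ k ∈ Icc 1 n, HmlExact (n - k) m := by
  simp only [HmlExact]
  rw [sum_sigma']
  refine sum_nbij' (fun x => ⟨x i, i.removeNth x⟩) (fun p => i.insertNth p.1 p.2) ?_ ?_
    (fun x _ => Fin.insertNth_self_removeNth i x) (fun p _ => ?_) fun _ _ => rfl
  · intro x hx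
    rw [mem_filter_piFinset_Icc_one (fun x h => h.le), Fin.forall_iff_succAbove i,
      Fin.sum_univ_succAbove _ i] at hx
    simp only [mem_sigma, mem_Icc]
    rw [mem_filter_piFinset_Icc_one (fun x h => h.le)]
    refine ⟨⟨hx.1.1, by omega⟩, hx.1.2, ?_⟩
    simp only [Fin.removeNth]
    omega
  · rintro ⟨k, y⟩ hy
    simp only [mem_sigma, mem_Icc] at hy
    rw [mem_filter_piFinset_Icc_one (fun x h => h.le)] at hy
    rw [mem_filter_piFinset_Icc_one (fun x h => h.le), Fin.forall_iff_succAbove i,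
      Fin.sum_univ_succAbove _ i]
    simp only [Fin.insertNth_apply_same, Fin.insertNth_apply_succAbove]
    exact ⟨⟨hy.1.1, hy.2.1⟩, by omega⟩
  · simp [Fin.removeNth_insertNth]

theorem natCast_mul_HmlExact_succ (n m : ℕ) :
    n * HmlExact n (m + 1) = (m + 1) * ∑ j ∈ range n, HmlExact j m := by
  have hsplit : ∀ x ∈ (Fintype.piFinset fun _ : Fin (m + 1) => Icc 1 n).filter
      (fun x => ∑ t, x t = n),
      (n : ℚ) * ∏ t, 1 / (x t : ℚ) =
        ∑ i : Fin (m + 1), ∏ j, (1 : ℚ) / (i.removeNth x j) := by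
    intro x hx
    rw [mem_filter_piFinset_Icc_one (fun x h => h.le)] at hx
    rw [← hx.2, Nat.cast_sum, sum_mul]
    refine sum_congr rfl fun i _ => ?_
    have : (x i : ℚ) ≠ 0 := by have := hx.1 i; positivity
    rw [Fin.prod_univ_succAbove _ i, ← mul_assoc, mul_one_div_cancel this, one_mul]
    rfl
  rw [HmlExact, mul_sum, sum_congr rfl hsplit, sum_comm]
  simp only [sum_prod_removeNth_eq, sum_const, card_univ, Fintype.card_fin, nsmul_eq_mul]
  rw [← Ico_add_one_right_eq_Icc, sum_Ico_eq_sum_range, Nat.add_sub_cancel,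
    ← sum_range_reflect]
  push_cast
  congr 1
  refine sum_congr rfl fun j hj => ?_
  rw [mem_range] at hj
  congr 1
  omega

theorem Nat.stirlingFirst_succ_succ_div_factorial (K : Type*) [Field K] [CharZero K] (n m : ℕ) :
    (Nat.stirlingFirst (n + 1) (m + 1) : K) / n.factorial =
      ∑ j ∈ range (n + 1), (Nat.stirlingFirst j m : K) / j.factorial := by
  induction n with
  | zero => simp [Nat.stirlingFirst_succ_succ]
  | succ n ih =>
    rw [sum_range_succ, ← ih, Nat.stirlingFirst_succ_succ, Nat.factorial_succ]
    push_cast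
    field_simp

theorem HmlExact_eq (n m : ℕ) :
    HmlExact n m = m.factorial * Nat.stirlingFirst n m / n.factorial := by
  induction m generalizing n with
  | zero => cases n <;> simp [HmlExact]
  | succ m ih =>
    cases n with
    | zero => simp [HmlExact]
    | succ n =>
      have h := natCast_mul_HmlExact_succ (n + 1) m
      simp only [ih, mul_div_assoc, ← mul_sum,
        ← Nat.stirlingFirst_succ_succ_div_factorial] at h
      rw [Nat.factorial_succ, Nat.factorial_succ]
      push_cast at h ⊢
      field_simp at h ⊢
      linear_combination h

theorem Hml_succ_sub (n m : ℕ) :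
    Hml (n + 1) m - Hml n m = m.factorial * Nat.stirlingFirst (n + 1) m / (n + 1).factorial := by
  rw [Hml_succ_s16, add_sub_cancel_left, HmlExact_eq]

theorem gchoose_succ (r : ℂ) (k : ℕ) :
    gchoose r (k + 1) = gchoose (r - 1) (k + 1) + gchoose (r - 1) k := by
  have hshift : ∏ i ∈ range (k + 1), (r - i) = r * ∏ i ∈ range k, (r - 1 - i) := by
    rw [prod_range_succ', mul_comm]
    push_cast
    simp only [sub_add_eq_sub_sub_swap, sub_zero]
  rw [gchoose, gchoose, gchoose, hshift, prod_range_succ, Nat.factorial_succ]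
  push_cast
  field_simp
  ring

theorem sum_range_neg_one_pow_mul_gchoose_mul_sub (r : ℂ) (f : ℕ → ℂ) (n : ℕ) :
    ∑ k ∈ range (n + 1), (-1) ^ k * gchoose (r - 1) k * (f (k + 1) - f k) =
      (-1) ^ n * gchoose (r - 1) n * f (n + 1) -
        ∑ k ∈ range (n + 1), (-1) ^ k * gchoose r k * f k := by
  induction n with
  | zero => simp [gchoose]
  | succ n ih =>
    rw [sum_range_succ, ih, sum_range_succ _ (n + 1), gchoose_succ r n]
    ring

theorem stmt_16_general (r : ℂ) (n m : ℕ) (hm : 1 ≤ m) :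
    ∑ k ∈ Finset.range (n + 1), (-1) ^ k * gchoose (r - 1) k *
        ∑ j ∈ Finset.Icc m (k + 1),
          (k.choose (j - 1) : ℂ) * (stirlingFirst j m : ℂ) / (j.factorial : ℂ) =
      (-1) ^ n * gchoose (r - 1) n * (1 / (m.factorial : ℂ)) * (Hml (n + 1) m : ℂ) -
        (1 / (m.factorial : ℂ)) *
          ∑ k ∈ Finset.range (n + 1), (-1) ^ k * gchoose r k * (Hml k m : ℂ) := by
  have hinner (k : ℕ) : ∑ j ∈ Icc m (k + 1),
      (k.choose (j - 1) : ℂ) * (stirlingFirst j m : ℂ) / (j.factorial : ℂ) =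
        1 / m.factorial * ((Hml (k + 1) m : ℂ) - Hml k m) := by
    rw [sum_Icc_choose_pred_mul_stirlingFirst_div_factorial ℂ k hm, ← Rat.cast_sub,
      Hml_succ_sub]
    push_cast
    rw [one_div_mul_eq_div, mul_div_assoc,
      mul_div_cancel_left₀ _ (Nat.cast_ne_zero.2 m.factorial_ne_zero)]
  calc _ = 1 / m.factorial * ∑ k ∈ range (n + 1),
        (-1) ^ k * gchoose (r - 1) k * ((Hml (k + 1) m : ℂ) - Hml k m) := by
        rw [mul_sum]
        exact sum_congr rfl fun k _ => by rw [hinner]; ring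
    _ = _ := by
        rw [sum_range_neg_one_pow_mul_gchoose_mul_sub r (fun k => (Hml k m : ℂ))]
        ring

theorem stmt_16 (r : ℂ) (n m : ℕ) (hm : 1 ≤ m) (hn : 1 ≤ n) :
    ∑ k ∈ Finset.range (n + 1), (-1) ^ k * gchoose (r - 1) k *
        ∑ j ∈ Finset.Icc m (k + 1),
          (k.choose (j - 1) : ℂ) * (stirlingFirst j m : ℂ) / (j.factorial : ℂ) =
      (-1) ^ n * gchoose (r - 1) n * (1 / (m.factorial : ℂ)) * (Hml (n + 1) m : ℂ) -
        (1 / (m.factorial : ℂ)) *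
          ∑ k ∈ Finset.range (n + 1), (-1) ^ k * gchoose r k * (Hml k m : ℂ) :=
  stmt_16_general r n m hm
end
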